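/- With D_q and S_q the Askey–Wilson divided-difference and averaging operators, and U₂(x) = (α²-1)(x²-1) where α=(q^{1/2}+q^{-1/2})/2, one has for all polynomials f, g: S_q(fg) = (D_q f)(D_q g)·U₂ + (S_q f)(S_q g). -/

import Mathlib

/-!
Write `x₊, x₋` for `x(s ± 1/2)` and `J z = (z + z⁻¹)/2`, so that `x(s) = J(q^s)` and `α = J(q^{1/2})`.
For any values `f(x₊), f(x₋), g(x₊), g(x₋)` the average of the product is the product of the averages
plus a quarter of the product of the differences; dividing the differences by `x₊ - x₋` turns this into
`S(fg) = (Df)(Dg)·((x₊ - x₋)/2)² + (Sf)(Sg)`. It remains that `((x₊ - x₋)/2)² = U₂(x(s))`: with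
`a = q^s`, `r = q^{1/2}` one has `x₊ - x₋ = J(ar) - J(ar⁻¹) = (a - a⁻¹)(r - r⁻¹)/2`, while
`J(z)² - 1 = ((z - z⁻¹)/2)²`.
-/

noncomputable def xlat (q : ℝ) (s : ℂ) : ℂ := ((q : ℂ) ^ s + (q : ℂ) ^ (-s)) / 2

noncomputable def Dq (q : ℝ) (f : Polynomial ℂ) (s : ℂ) : ℂ :=
  (f.eval (xlat q (s + 1/2)) - f.eval (xlat q (s - 1/2))) /
    (xlat q (s + 1/2) - xlat q (s - 1/2))

noncomputable def Sq (q : ℝ) (f : Polynomial ℂ) (s : ℂ) : ℂ :=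
  (f.eval (xlat q (s + 1/2)) + f.eval (xlat q (s - 1/2))) / 2

noncomputable def alphaQ (q : ℝ) : ℝ := (q ^ ((1 : ℝ) / 2) + q ^ (-(1 : ℝ) / 2)) / 2

theorem mul_add_mul_div_two_eq {K : Type*} [Field K] [NeZero (2 : K)] (a b c d : K) {e : K} (he : e ≠ 0) :
    (a * c + b * d) / 2 = (a - b) / e * ((c - d) / e) * (e / 2) ^ 2 + (a + b) / 2 * ((c + d) / 2) := by
  field_simp
  ring

section Joukowski

variable {K : Type*} [Field K]

def joukowski (z : K) : K := (z + z⁻¹) / 2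

theorem joukowski_mul_sub_joukowski_mul_inv (a r : K) :
    joukowski (a * r) - joukowski (a * r⁻¹) = (a - a⁻¹) * (r - r⁻¹) / 2 := by
  simp only [joukowski, mul_inv, inv_inv]
  ring

variable [NeZero (2 : K)]

theorem joukowski_sq_sub_one {z : K} (hz : z ≠ 0) : joukowski z ^ 2 - 1 = ((z - z⁻¹) / 2) ^ 2 := by
  unfold joukowski
  field_simp
  ring

theorem sq_half_joukowski_mul_sub_joukowski_mul_inv {a r : K} (ha : a ≠ 0) (hr : r ≠ 0) :
    ((joukowski (a * r) - joukowski (a * r⁻¹)) / 2) ^ 2 =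
      (joukowski r ^ 2 - 1) * (joukowski a ^ 2 - 1) := by
  rw [joukowski_mul_sub_joukowski_mul_inv, joukowski_sq_sub_one ha, joukowski_sq_sub_one hr]
  ring

end Joukowski

theorem xlat_eq_joukowski (q : ℝ) (s : ℂ) : xlat q s = joukowski ((q : ℂ) ^ s) := by
  rw [xlat, joukowski, Complex.cpow_neg]

theorem xlat_add_half {q : ℝ} (hq : q ≠ 0) (s : ℂ) :
    xlat q (s + 1/2) = joukowski ((q : ℂ) ^ s * (q : ℂ) ^ (1/2 : ℂ)) := by
  rw [xlat_eq_joukowski, Complex.cpow_add _ _ (Complex.ofReal_ne_zero.mpr hq)]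

theorem xlat_sub_half {q : ℝ} (hq : q ≠ 0) (s : ℂ) :
    xlat q (s - 1/2) = joukowski ((q : ℂ) ^ s * ((q : ℂ) ^ (1/2 : ℂ))⁻¹) := by
  rw [xlat_eq_joukowski, sub_eq_add_neg, Complex.cpow_add _ _ (Complex.ofReal_ne_zero.mpr hq),
    Complex.cpow_neg]

theorem alphaQ_eq_joukowski {q : ℝ} (hq : 0 ≤ q) :
    (alphaQ q : ℂ) = joukowski ((q : ℂ) ^ (1/2 : ℂ)) := by
  have hsqrt : ((q ^ ((1 : ℝ) / 2) : ℝ) : ℂ) = (q : ℂ) ^ (1/2 : ℂ) := by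
    rw [Complex.ofReal_cpow hq]
    norm_num
  rw [alphaQ, joukowski, neg_div, Real.rpow_neg hq]
  push_cast
  rw [hsqrt]

theorem sq_half_xlat_add_half_sub_xlat_sub_half {q : ℝ} (hq : 0 < q) (s : ℂ) :
    ((xlat q (s + 1/2) - xlat q (s - 1/2)) / 2) ^ 2 = ((alphaQ q : ℂ) ^ 2 - 1) * (xlat q s ^ 2 - 1) := by
  have hqc : (q : ℂ) ≠ 0 := Complex.ofReal_ne_zero.mpr hq.ne'
  rw [xlat_add_half hq.ne', xlat_sub_half hq.ne', alphaQ_eq_joukowski hq.le, xlat_eq_joukowski,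
    sq_half_joukowski_mul_sub_joukowski_mul_inv]
  all_goals simp [Complex.cpow_eq_zero_iff, hqc]

theorem stmt_5_general (q : ℝ) (hq0 : 0 < q) (f g : Polynomial ℂ) (s : ℂ)
    (hs : xlat q (s + 1/2) ≠ xlat q (s - 1/2)) :
    Sq q (f * g) s =
      Dq q f s * Dq q g s * (((alphaQ q : ℂ)) ^ 2 - 1) * ((xlat q s) ^ 2 - 1) +
        Sq q f s * Sq q g s := by
  rw [mul_assoc (Dq q f s * Dq q g s), ← sq_half_xlat_add_half_sub_xlat_sub_half hq0]
  simp only [Sq, Dq, Polynomial.eval_mul]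
  exact mul_add_mul_div_two_eq _ _ _ _ (sub_ne_zero.mpr hs)

theorem stmt_5 (q : ℝ) (hq0 : 0 < q) (hq1 : q < 1) (f g : Polynomial ℂ) (s : ℂ)
    (hs : xlat q (s + 1/2) ≠ xlat q (s - 1/2)) :
    Sq q (f * g) s =
      Dq q f s * Dq q g s * (((alphaQ q : ℂ)) ^ 2 - 1) * ((xlat q s) ^ 2 - 1) +
        Sq q f s * Sq q g s :=
  stmt_5_general q hq0 f g s hs
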